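/- arXiv:1601.05626 — 3 statements merged into one kernel-verified Lean document; each statement's English description precedes it below -/
import Mathlib

section
/- Let f : (0,∞) → ℝ be a function satisfying: (1) -∞ < f(ρ) < 0 for all ρ > 0 (writing I(ρ²) = f(ρ)); (2) weak subadditivity: f(ρ) ≤ f(μ) + f(√(ρ²-μ²)) for all 0 < μ < ρ; (3) f is continuous; (4) f(ρ)/ρ² → 0 as ρ → 0⁺. Then f is strictly decreasing, i.e. f(ρ) < f(μ) for all 0 < μ < ρ. -/
open Set Filter

theorem ground_state_strictly_decreasing (f : ℝ → ℝ)
    (hneg : ∀ ρ : ℝ, 0 < ρ → f ρ < 0)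
    (hsub : ∀ ρ μ : ℝ, 0 < μ → μ < ρ → f ρ ≤ f μ + f (Real.sqrt (ρ^2 - μ^2)))
    (hcont : ContinuousOn f (Ioi 0))
    (hlim : Tendsto (fun ρ => f ρ / ρ^2) (nhdsWithin 0 (Ioi 0)) (nhds 0)) :
    ∀ ρ μ : ℝ, 0 < μ → μ < ρ → f ρ < f μ := by
  intro ρ μ hμ hlt
  have h := hsub ρ μ hμ hlt
  have hpos : 0 < Real.sqrt (ρ^2 - μ^2) := Real.sqrt_pos.2 (by nlinarith)
  linarith [hneg _ hpos]
end

section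
/- Let f : (0,∞) → ℝ satisfy: (1) f(ρ) < 0 for all ρ > 0; (2) f(ρ) ≤ f(μ) + f(√(ρ²-μ²)) for all 0 < μ < ρ; (3) f is continuous; (4) f(ρ)/ρ² → 0 as ρ → 0⁺. Then inf_{ρ>0} f(ρ) = -∞, i.e. f is unbounded below. -/
open Set Filter

theorem ground_state_unbounded_below (f : ℝ → ℝ)
    (hneg : ∀ ρ : ℝ, 0 < ρ → f ρ < 0)
    (hsub : ∀ ρ μ : ℝ, 0 < μ → μ < ρ → f ρ ≤ f μ + f (Real.sqrt (ρ^2 - μ^2)))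
    (hcont : ContinuousOn f (Ioi 0))
    (hlim : Tendsto (fun ρ => f ρ / ρ^2) (nhdsWithin 0 (Ioi 0)) (nhds 0)) :
    ∀ M : ℝ, ∃ ρ : ℝ, 0 < ρ ∧ f ρ < M := by
  intro M
  have h2 : (1:ℝ) < Real.sqrt 2 := by
    rw [show (1:ℝ) = Real.sqrt 1 by simp]
    exact Real.sqrt_lt_sqrt (by norm_num) (by norm_num)
  have hpos : ∀ n : ℕ, (0:ℝ) < Real.sqrt 2 ^ n := fun n =>
    pow_pos (by linarith) n
  have key : ∀ n : ℕ, f (Real.sqrt 2 ^ n) ≤ 2 ^ n * f 1 := by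
    intro n
    induction n with
    | zero => simp
    | succ n ih =>
      have hlt : Real.sqrt 2 ^ n < Real.sqrt 2 ^ (n + 1) := by
        calc Real.sqrt 2 ^ n = 1 * Real.sqrt 2 ^ n := by ring
        _ < Real.sqrt 2 * Real.sqrt 2 ^ n := by
            exact mul_lt_mul_of_pos_right h2 (hpos n)
        _ = Real.sqrt 2 ^ (n + 1) := by ring
      have hsq : (Real.sqrt 2 ^ (n+1))^2 - (Real.sqrt 2 ^ n)^2 = (Real.sqrt 2 ^ n)^2 := by
        have : Real.sqrt 2 ^ 2 = 2 := Real.sq_sqrt (by norm_num)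
        rw [← pow_mul, ← pow_mul]
        rw [show (n+1)*2 = n*2+2 by ring, pow_add]
        rw [show Real.sqrt 2 ^ (n*2) = (Real.sqrt 2 ^ 2)^n by rw [← pow_mul, Nat.mul_comm]]
        rw [this]
        ring
      have := hsub (Real.sqrt 2 ^ (n+1)) (Real.sqrt 2 ^ n) (hpos n) hlt
      rw [hsq, Real.sqrt_sq (hpos n).le] at this
      calc f (Real.sqrt 2 ^ (n+1)) ≤ f (Real.sqrt 2 ^ n) + f (Real.sqrt 2 ^ n) := this
      _ ≤ 2^n * f 1 + 2^n * f 1 := by linarith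
      _ = 2^(n+1) * f 1 := by ring
  have hf1 : f 1 < 0 := hneg 1 one_pos
  obtain ⟨n, hn⟩ := pow_unbounded_of_one_lt (M / f 1) (by norm_num : (1:ℝ) < 2)
  refine ⟨Real.sqrt 2 ^ n, hpos n, ?_⟩
  have : (2:ℝ)^n * f 1 < M := by
    rw [div_lt_iff_of_neg hf1] at hn
    linarith [hn]
  linarith [key n]
end

section
/- Let g : (0,∞) → ℝ be continuous with g(ρ) < 0 for all ρ, g(ρ)/ρ² → 0 as ρ → 0⁺ and as ρ → ∞, and satisfying g(ρ) ≤ g(μ) + g(√(ρ²-μ²)) for 0 < μ < ρ. If h(ρ) := g(ρ)/ρ² attains a global minimum at ρ₀ > 0, then h(√k · ρ₀) = h(ρ₀) for every positive integer k. -/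
/-!
With `m` the minimum of `g ρ / ρ²`, subadditivity at `ρ² = μ² + ν²` shows that the set of
`ρ > 0` with `g ρ = m ρ²` is closed under Pythagorean addition `(μ, ν) ↦ √(μ² + ν²)`.
Since `√(k + 1) ρ₀ = √((√k ρ₀)² + ρ₀²)`, it contains every `√k ρ₀`.
-/

open Set Filter

section Pythagorean

variable {g : ℝ → ℝ}

theorem le_add_of_pythagorean
    (hsub : ∀ ρ μ : ℝ, 0 < μ → μ < ρ → g ρ ≤ g μ + g (Real.sqrt (ρ^2 - μ^2)))
    {μ ν : ℝ} (hμ : 0 < μ) (hν : 0 < ν) :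
    g (Real.sqrt (μ^2 + ν^2)) ≤ g μ + g ν := by
  have hlt : μ < Real.sqrt (μ^2 + ν^2) :=
    Real.lt_sqrt_of_sq_lt (by nlinarith)
  have hν' : Real.sqrt (Real.sqrt (μ^2 + ν^2) ^ 2 - μ^2) = ν := by
    rw [Real.sq_sqrt (by positivity), add_sub_cancel_left, Real.sqrt_sq hν.le]
  simpa only [hν'] using hsub _ μ hμ hlt

theorem eq_mul_sq_of_pythagorean
    (hsub : ∀ ρ μ : ℝ, 0 < μ → μ < ρ → g ρ ≤ g μ + g (Real.sqrt (ρ^2 - μ^2)))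
    {m : ℝ} (hmin : ∀ ρ : ℝ, 0 < ρ → m * ρ^2 ≤ g ρ)
    {μ ν : ℝ} (hμ : 0 < μ) (hν : 0 < ν) (hgμ : g μ = m * μ^2) (hgν : g ν = m * ν^2) :
    g (Real.sqrt (μ^2 + ν^2)) = m * Real.sqrt (μ^2 + ν^2) ^ 2 := by
  refine le_antisymm ?_ (hmin _ (by positivity))
  calc g (Real.sqrt (μ^2 + ν^2)) ≤ g μ + g ν := le_add_of_pythagorean hsub hμ hν
    _ = m * Real.sqrt (μ^2 + ν^2) ^ 2 := by
      rw [hgμ, hgν, Real.sq_sqrt (by positivity)]; ring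

end Pythagorean

theorem Real.sqrt_natCast_succ_mul {a : ℝ} (ha : 0 ≤ a) (k : ℕ) :
    Real.sqrt ((k + 1 : ℕ) : ℝ) * a = Real.sqrt ((Real.sqrt k * a)^2 + a^2) := by
  rw [mul_pow, Real.sq_sqrt k.cast_nonneg, ← add_one_mul, Real.sqrt_mul' _ (sq_nonneg a),
    Real.sqrt_sq ha, Nat.cast_succ]

theorem minimum_propagates_general (g : ℝ → ℝ)
    (hsub : ∀ ρ μ : ℝ, 0 < μ → μ < ρ → g ρ ≤ g μ + g (Real.sqrt (ρ^2 - μ^2)))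
    (ρ₀ : ℝ) (hρ₀ : 0 < ρ₀)
    (hmin : ∀ ρ : ℝ, 0 < ρ → g ρ₀ / ρ₀^2 ≤ g ρ / ρ^2) :
    ∀ k : ℕ, 0 < k → g (Real.sqrt k * ρ₀) / (Real.sqrt k * ρ₀)^2 = g ρ₀ / ρ₀^2 := by
  set m := g ρ₀ / ρ₀^2
  have hbound : ∀ ρ : ℝ, 0 < ρ → m * ρ^2 ≤ g ρ := fun ρ hρ =>
    (le_div_iff₀ (by positivity)).mp (hmin ρ hρ)
  have hgρ₀ : g ρ₀ = m * ρ₀^2 := (div_mul_cancel₀ _ (by positivity)).symm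
  have hmul : ∀ k : ℕ, 0 < k → g (Real.sqrt k * ρ₀) = m * (Real.sqrt k * ρ₀)^2 := by
    intro k hk
    induction k, hk using Nat.le_induction with
    | base => simpa using hgρ₀
    | succ k hk ih =>
      rw [Real.sqrt_natCast_succ_mul hρ₀.le]
      exact eq_mul_sq_of_pythagorean hsub hbound (by positivity) hρ₀ ih hgρ₀
  intro k hk
  rw [hmul k hk, mul_div_cancel_right₀ _ (by positivity)]

theorem minimum_propagates (g : ℝ → ℝ)
    (hcont : ContinuousOn g (Ioi 0))
    (hneg : ∀ ρ : ℝ, 0 < ρ → g ρ < 0)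
    (hlim0 : Tendsto (fun ρ => g ρ / ρ^2) (nhdsWithin 0 (Ioi 0)) (nhds 0))
    (hliminf : Tendsto (fun ρ => g ρ / ρ^2) atTop (nhds 0))
    (hsub : ∀ ρ μ : ℝ, 0 < μ → μ < ρ → g ρ ≤ g μ + g (Real.sqrt (ρ^2 - μ^2)))
    (ρ₀ : ℝ) (hρ₀ : 0 < ρ₀)
    (hmin : ∀ ρ : ℝ, 0 < ρ → g ρ₀ / ρ₀^2 ≤ g ρ / ρ^2) :
    ∀ k : ℕ, 0 < k → g (Real.sqrt k * ρ₀) / (Real.sqrt k * ρ₀)^2 = g ρ₀ / ρ₀^2 :=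
  minimum_propagates_general g hsub ρ₀ hρ₀ hmin
end
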